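/- Let X be a nonempty compact topological space, let t > 0 and λ ≤ 0, and let φ, F : X → ℝ and r : X → ℝ be continuous functions with r(x) > 0 for all x, satisfying the pointwise identity φ(x)/t = log r(x) + λ·φ(x) + F(x) for all x ∈ X. Assume that log r(x₀) ≤ 0 at every point x₀ at which φ attains its global maximum over X, and log r(x₀) ≥ 0 at every point x₀ at which φ attains its global minimum over X. Then exp(-2·sup_X |F|) ≤ r(x) ≤ exp(2·sup_X |F|) for all x ∈ X. -/

import Mathlib

/-! At a maximum point `x₀` of `φ`, the hypothesis `log r(x₀) ≤ 0` together with
`log r = (1/t - λ) φ - F` bounds `(1/t - λ) φ` from above by `F(x₀) ≤ sup |F|` everywhere, since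
`1/t - λ > 0`; symmetrically at a minimum point. Hence `|log r| ≤ 2 sup |F|`. -/

open Real

theorem mul_sub_le_two_mul_of_forall_isMax {X : Type*} [TopologicalSpace X] [CompactSpace X]
    {φ F : X → ℝ} {c M : ℝ} (hc : 0 ≤ c) (hφ : Continuous φ) (hFM : ∀ x, |F x| ≤ M)
    (hmax : ∀ x₀, (∀ x, φ x ≤ φ x₀) → c * φ x₀ - F x₀ ≤ 0) (x : X) :
    c * φ x - F x ≤ 2 * M := by
  obtain ⟨x₀, -, hx₀⟩ := isCompact_univ.exists_isMaxOn ⟨x, Set.mem_univ x⟩ hφ.continuousOn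
  have hx₀ : ∀ y, φ y ≤ φ x₀ := fun y => hx₀ (Set.mem_univ y)
  calc c * φ x - F x ≤ c * φ x₀ - F x := by gcongr; exact hx₀ x
    _ ≤ F x₀ - F x := by linarith [hmax x₀ hx₀]
    _ ≤ 2 * M := by linarith [le_abs_self (F x₀), neg_abs_le (F x), hFM x₀, hFM x]

theorem abs_mul_sub_le_two_mul_of_forall_isMax_isMin {X : Type*} [TopologicalSpace X]
    [CompactSpace X] {φ F : X → ℝ} {c M : ℝ} (hc : 0 ≤ c) (hφ : Continuous φ)
    (hFM : ∀ x, |F x| ≤ M)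
    (hmax : ∀ x₀, (∀ x, φ x ≤ φ x₀) → c * φ x₀ - F x₀ ≤ 0)
    (hmin : ∀ x₀, (∀ x, φ x₀ ≤ φ x) → 0 ≤ c * φ x₀ - F x₀) (x : X) :
    |c * φ x - F x| ≤ 2 * M := by
  have upper := mul_sub_le_two_mul_of_forall_isMax hc hφ hFM hmax x
  have lower := mul_sub_le_two_mul_of_forall_isMax (φ := -φ) (F := -F) hc hφ.neg
    (by simpa only [Pi.neg_apply, abs_neg] using hFM)
    (fun x₀ hx₀ => by
      have := hmin x₀ fun y => neg_le_neg_iff.mp (hx₀ y)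
      simp only [Pi.neg_apply]
      linarith) x
  simp only [Pi.neg_apply] at lower
  exact abs_le.mpr ⟨by linarith, upper⟩

theorem exp_neg_le_and_le_exp_of_abs_log_le {r a : ℝ} (hr : 0 < r) (h : |log r| ≤ a) :
    exp (-a) ≤ r ∧ r ≤ exp a :=
  ⟨(le_log_iff_exp_le hr).mp (neg_le_of_abs_le h), (log_le_iff_le_exp hr).mp (le_of_abs_le h)⟩

theorem stmt_9_general (X : Type*) [TopologicalSpace X] [CompactSpace X]
    (t lam : ℝ) (ht : 0 < t) (hlam : lam ≤ 0)
    (φ F r : X → ℝ)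
    (hφ : Continuous φ) (hF : Continuous F)
    (hr0 : ∀ x, 0 < r x)
    (heq : ∀ x, φ x / t = Real.log (r x) + lam * φ x + F x)
    (hmax : ∀ x₀, (∀ x, φ x ≤ φ x₀) → Real.log (r x₀) ≤ 0)
    (hmin : ∀ x₀, (∀ x, φ x₀ ≤ φ x) → 0 ≤ Real.log (r x₀)) :
    ∀ x, Real.exp (-2 * ⨆ y, |F y|) ≤ r x ∧ r x ≤ Real.exp (2 * ⨆ y, |F y|) := by
  intro x
  have hFM : ∀ y, |F y| ≤ ⨆ y, |F y| := le_ciSup (isCompact_range hF.abs).bddAbove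
  have hc : 0 ≤ t⁻¹ - lam := by linarith [inv_pos.mpr ht]
  have hlog : ∀ y, log (r y) = (t⁻¹ - lam) * φ y - F y := fun y => by
    linear_combination -heq y
  simp only [hlog] at hmax hmin
  rw [neg_mul]
  exact exp_neg_le_and_le_exp_of_abs_log_le (hr0 x)
    (hlog x ▸ abs_mul_sub_le_two_mul_of_forall_isMax_isMin hc hφ hFM hmax hmin x)

/-- First step of the C² estimate (Lemma 6.1): the C⁰ bound on the potential
is equivalent to a two-sided volume-form bound `C⁻¹ ≤ ωⁿ/ω̂ⁿ ≤ C`. -/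
theorem stmt_9 (X : Type*) [TopologicalSpace X] [CompactSpace X] [Nonempty X]
    (t lam : ℝ) (ht : 0 < t) (hlam : lam ≤ 0)
    (φ F r : X → ℝ)
    (hφ : Continuous φ) (hF : Continuous F) (hr : Continuous r)
    (hr0 : ∀ x, 0 < r x)
    (heq : ∀ x, φ x / t = Real.log (r x) + lam * φ x + F x)
    (hmax : ∀ x₀, (∀ x, φ x ≤ φ x₀) → Real.log (r x₀) ≤ 0)
    (hmin : ∀ x₀, (∀ x, φ x₀ ≤ φ x) → 0 ≤ Real.log (r x₀)) :
    ∀ x, Real.exp (-2 * ⨆ y, |F y|) ≤ r x ∧ r x ≤ Real.exp (2 * ⨆ y, |F y|) :=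
  stmt_9_general X t lam ht hlam φ F r hφ hF hr0 heq hmax hmin
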